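/- arXiv:2402.03136 — 3 statements merged into one kernel-verified Lean document; each statement's English description precedes it below -/
import Mathlib

section
/- The map τ ↦ Σ_{a∈A} π_τ(a)·u(a), where π_τ(a) = exp(τ·u(a)) / Σ_b exp(τ·u(b)), is monotonically nondecreasing in τ on ℝ; i.e. the expected utility under the softmax distribution increases with temperature. -/
open Finset

/-- The expected utility under the softmax distribution is
monotonically nondecreasing in the temperature. -/
theorem softmax_utility_monotone
    {A : Type*} [Fintype A] [Nonempty A] (u : A → ℝ) :
    Monotone (fun τ : ℝ => ∑ a, (Real.exp (τ * u a) / ∑ b, Real.exp (τ * u b)) * u a) := by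
  have hD : ∀ τ : ℝ, 0 < ∑ b, Real.exp (τ * u b) := fun τ =>
    Finset.sum_pos (fun b _ => Real.exp_pos _) Finset.univ_nonempty
  have hfun : (fun τ : ℝ => ∑ a, (Real.exp (τ * u a) / ∑ b, Real.exp (τ * u b)) * u a)
      = fun τ : ℝ => (∑ a, Real.exp (τ * u a) * u a) / (∑ b, Real.exp (τ * u b)) := by
    funext τ
    rw [Finset.sum_div]
    exact Finset.sum_congr rfl fun a _ => by ring
  rw [hfun]
  have hderiv : ∀ τ : ℝ, HasDerivAt
      (fun τ : ℝ => (∑ a, Real.exp (τ * u a) * u a) / (∑ b, Real.exp (τ * u b)))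
      (((∑ a, Real.exp (τ * u a) * u a * u a) * (∑ b, Real.exp (τ * u b)) -
        (∑ a, Real.exp (τ * u a) * u a) * (∑ a, Real.exp (τ * u a) * u a)) /
        (∑ b, Real.exp (τ * u b)) ^ 2) τ := by
    intro τ
    have hexp : ∀ a : A, HasDerivAt (fun τ : ℝ => Real.exp (τ * u a))
        (Real.exp (τ * u a) * u a) τ := fun a => (hasDerivAt_mul_const (u a)).exp
    have hN : HasDerivAt (fun τ : ℝ => ∑ a, Real.exp (τ * u a) * u a)
        (∑ a, Real.exp (τ * u a) * u a * u a) τ :=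
      HasDerivAt.fun_sum fun a _ => (hexp a).mul_const (u a)
    have hDen : HasDerivAt (fun τ : ℝ => ∑ b, Real.exp (τ * u b))
        (∑ a, Real.exp (τ * u a) * u a) τ :=
      HasDerivAt.fun_sum fun a _ => hexp a
    exact hN.div hDen (hD τ).ne'
  have hnonneg : ∀ τ : ℝ, 0 ≤ ((∑ a, Real.exp (τ * u a) * u a * u a) * (∑ b, Real.exp (τ * u b)) -
        (∑ a, Real.exp (τ * u a) * u a) * (∑ a, Real.exp (τ * u a) * u a)) /
        (∑ b, Real.exp (τ * u b)) ^ 2 := by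
    intro τ
    apply div_nonneg _ (sq_nonneg _)
    rw [sub_nonneg, ← sq]
    exact Finset.sum_sq_le_sum_mul_sum_of_sq_eq_mul Finset.univ
      (fun a _ => by rw [mul_assoc]; exact mul_nonneg (Real.exp_pos _).le (mul_self_nonneg _))
      (fun a _ => (Real.exp_pos _).le)
      (fun a _ => by ring)
  exact monotone_of_deriv_nonneg (fun τ => (hderiv τ).differentiableAt)
    (fun τ => (hderiv τ).deriv ▸ hnonneg τ)
end

section
/- The Shannon entropy H(π_τ) = −Σ_{a∈A} π_τ(a)·log π_τ(a) of the softmax distribution π_τ(a) ∝ exp(τ·u(a)) is monotonically nonincreasing in τ for τ ≥ 0. -/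
open Finset

noncomputable def smxZ {A : Type*} [Fintype A] (u : A → ℝ) (τ : ℝ) : ℝ :=
  ∑ a, Real.exp (τ * u a)

noncomputable def smxN {A : Type*} [Fintype A] (u : A → ℝ) (τ : ℝ) : ℝ :=
  ∑ a, u a * Real.exp (τ * u a)

noncomputable def smxM {A : Type*} [Fintype A] (u : A → ℝ) (τ : ℝ) : ℝ :=
  ∑ a, (u a) ^ 2 * Real.exp (τ * u a)

noncomputable def smxE {A : Type*} [Fintype A] (u : A → ℝ) (τ : ℝ) : ℝ :=
  smxN u τ / smxZ u τ

lemma smxZ_pos {A : Type*} [Fintype A] [Nonempty A] (u : A → ℝ) (τ : ℝ) :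
    0 < smxZ u τ :=
  Finset.sum_pos (fun a _ => Real.exp_pos _) Finset.univ_nonempty

lemma smxZ_hasDeriv {A : Type*} [Fintype A] (u : A → ℝ) (τ : ℝ) :
    HasDerivAt (smxZ u) (smxN u τ) τ := by
  have h : ∀ a : A, HasDerivAt (fun t => Real.exp (t * u a))
      (u a * Real.exp (τ * u a)) τ := by
    intro a
    have := ((hasDerivAt_id τ).mul_const (u a)).exp
    simpa [mul_comm] using this
  have := HasDerivAt.fun_sum (u := (Finset.univ : Finset A)) (fun a (_ : a ∈ Finset.univ) => h a)
  exact this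

lemma smxN_hasDeriv {A : Type*} [Fintype A] (u : A → ℝ) (τ : ℝ) :
    HasDerivAt (smxN u) (smxM u τ) τ := by
  have h : ∀ a : A, HasDerivAt (fun t => u a * Real.exp (t * u a))
      ((u a) ^ 2 * Real.exp (τ * u a)) τ := by
    intro a
    have := (((hasDerivAt_id τ).mul_const (u a)).exp).const_mul (u a)
    refine this.congr_deriv ?_
    simp only [id_eq]
    ring
  have := HasDerivAt.fun_sum (u := (Finset.univ : Finset A)) (fun a (_ : a ∈ Finset.univ) => h a)
  exact this

lemma smxLog_hasDeriv {A : Type*} [Fintype A] [Nonempty A] (u : A → ℝ) (τ : ℝ) :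
    HasDerivAt (fun t => Real.log (smxZ u t)) (smxE u τ) τ :=
  (smxZ_hasDeriv u τ).log (smxZ_pos u τ).ne'

lemma smxCS {A : Type*} [Fintype A] (u : A → ℝ) (τ : ℝ) :
    (smxN u τ) ^ 2 ≤ smxM u τ * smxZ u τ := by
  have h := Finset.sum_mul_sq_le_sq_mul_sq Finset.univ
    (fun a : A => u a * Real.exp (τ * u a / 2))
    (fun a : A => Real.exp (τ * u a / 2))
  have e2 : ∀ x : ℝ, Real.exp (x / 2) ^ 2 = Real.exp x := by
    intro x; rw [sq, ← Real.exp_add]; ring_nf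
  calc (smxN u τ) ^ 2 = (∑ a : A, (u a * Real.exp (τ * u a / 2)) * Real.exp (τ * u a / 2)) ^ 2 := by
        unfold smxN; congr 1; apply Finset.sum_congr rfl; intro a _
        rw [mul_assoc, ← sq, e2]
    _ ≤ (∑ a : A, (u a * Real.exp (τ * u a / 2)) ^ 2) * (∑ a : A, (Real.exp (τ * u a / 2)) ^ 2) := h
    _ = smxM u τ * smxZ u τ := by
        unfold smxM smxZ; congr 1 <;> (apply Finset.sum_congr rfl; intro a _)
        · rw [mul_pow, e2]
        · rw [e2]

lemma smxE_hasDeriv {A : Type*} [Fintype A] [Nonempty A] (u : A → ℝ) (τ : ℝ) :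
    HasDerivAt (smxE u) ((smxM u τ * smxZ u τ - (smxN u τ) ^ 2) / (smxZ u τ) ^ 2) τ := by
  have := (smxN_hasDeriv u τ).div (smxZ_hasDeriv u τ) (smxZ_pos u τ).ne'
  convert this using 1
  · rfl
  · rfl
  · rfl
  · ring

lemma smxE_mono {A : Type*} [Fintype A] [Nonempty A] (u : A → ℝ) :
    Monotone (smxE u) := by
  apply monotone_of_deriv_nonneg
  · exact fun τ => (smxE_hasDeriv u τ).differentiableAt
  · intro τ
    rw [(smxE_hasDeriv u τ).deriv]
    apply div_nonneg
    · linarith [smxCS u τ]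
    · positivity

lemma smxEntropy_eq {A : Type*} [Fintype A] [Nonempty A] (u : A → ℝ) (τ : ℝ) :
    -∑ a, (Real.exp (τ * u a) / ∑ b, Real.exp (τ * u b)) *
        Real.log (Real.exp (τ * u a) / ∑ b, Real.exp (τ * u b)) =
      Real.log (smxZ u τ) - τ * smxE u τ := by
  have hZ := smxZ_pos u τ
  have hZ' : (∑ b, Real.exp (τ * u b)) = smxZ u τ := rfl
  have key : ∀ a : A, (Real.exp (τ * u a) / smxZ u τ) *
      Real.log (Real.exp (τ * u a) / smxZ u τ) =
      (τ * (u a * Real.exp (τ * u a)) - Real.log (smxZ u τ) * Real.exp (τ * u a)) / smxZ u τ := by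
    intro a
    rw [Real.log_div (Real.exp_ne_zero _) hZ.ne', Real.log_exp]
    field_simp
  rw [hZ']
  simp only [key]
  rw [← Finset.sum_div, Finset.sum_sub_distrib, ← Finset.mul_sum, ← Finset.mul_sum]
  have : (∑ a : A, u a * Real.exp (τ * u a)) = smxN u τ := rfl
  rw [this, hZ']
  unfold smxE
  field_simp
  ring

/-- The Shannon entropy of the softmax distribution is
monotonically nonincreasing in the temperature on `[0, ∞)`. -/
theorem softmax_entropy_antitone
    {A : Type*} [Fintype A] [Nonempty A] (u : A → ℝ) :
    AntitoneOn
      (fun τ : ℝ =>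
        -∑ a, (Real.exp (τ * u a) / ∑ b, Real.exp (τ * u b)) *
            Real.log (Real.exp (τ * u a) / ∑ b, Real.exp (τ * u b)))
      (Set.Ici (0 : ℝ)) := by
  intro σ hσ τ hτ hστ
  simp only
  rw [smxEntropy_eq u σ, smxEntropy_eq u τ]
  rcases eq_or_lt_of_le hστ with rfl | hlt
  · exact le_rfl
  -- mean value theorem for log Z
  obtain ⟨c, hc, hceq⟩ := exists_hasDerivAt_eq_slope (fun t => Real.log (smxZ u t))
    (smxE u) hlt
    (Continuous.continuousOn (by
      rw [continuous_iff_continuousAt]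
      exact fun x => (smxLog_hasDeriv u x).continuousAt))
    (fun x _ => smxLog_hasDeriv u x)
  have hslope : Real.log (smxZ u τ) - Real.log (smxZ u σ) = (τ - σ) * smxE u c := by
    rw [eq_div_iff (by linarith : τ - σ ≠ 0)] at hceq
    linear_combination -hceq
  have hEc : smxE u c ≤ smxE u τ := smxE_mono u hc.2.le
  have hEσ : smxE u σ ≤ smxE u τ := smxE_mono u hστ
  have hσ0 : (0:ℝ) ≤ σ := hσ
  nlinarith [hslope, hEc, hEσ, hσ0, sub_pos.mpr hlt]
end

section
/- Fractional programming reduction: let f, g : S → ℝ with g(x) > 0 for all x in a nonempty set S, and suppose both the ratio problem and the parametric problems attain their suprema. Define F(p) = sup_{x∈S} (f(x) − p·g(x)). Then x* maximizes f(x)/g(x) over S with optimal value p* = f(x*)/g(x*) if and only if F(p*) = 0 and x* attains the supremum in F(p*). -/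
/-- Dinkelbach fractional-programming principle: `xs` maximizes
the ratio `f x / g x` with value `p* = f xs / g xs` iff the auxiliary function
`F p* = sup_x (f x - p* * g x)` is zero and `xs` attains this supremum. -/
theorem dinkelbach_principle
    {S : Type*} [Nonempty S] (f g : S → ℝ) (hg : ∀ x, 0 < g x)
    (hb : ∀ p : ℝ, BddAbove (Set.range fun x => f x - p * g x))
    (xs : S) :
    (∀ x, f x / g x ≤ f xs / g xs) ↔
      ((⨆ x, (f x - (f xs / g xs) * g x)) = 0 ∧
        ∀ x, f x - (f xs / g xs) * g x ≤ f xs - (f xs / g xs) * g xs) := by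
  set p := f xs / g xs with hp
  have hzero : f xs - p * g xs = 0 := by
    rw [hp, div_mul_cancel₀ _ (hg xs).ne']; ring
  constructor
  · intro h
    have hle : ∀ x, f x - p * g x ≤ 0 := fun x => by
      have := (div_le_iff₀ (hg x)).mp (h x)
      linarith
    have hsup : (⨆ x, (f x - p * g x)) = 0 := by
      apply le_antisymm (ciSup_le hle)
      calc (0:ℝ) = f xs - p * g xs := hzero.symm
        _ ≤ _ := le_ciSup (hb p) xs
    exact ⟨hsup, fun x => by rw [hzero]; exact hle x⟩
  · rintro ⟨-, h2⟩
    intro x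
    have := h2 x
    rw [hzero] at this
    rw [hp, div_le_div_iff₀ (hg x) (hg xs)]
    have : f x ≤ p * g x := by linarith
    rw [hp] at this
    calc f x * g xs ≤ (f xs / g xs * g x) * g xs := by
          nlinarith [(hg xs).le]
      _ = f xs * g x := by rw [div_mul_eq_mul_div, div_mul_cancel₀ _ (hg xs).ne']
end
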